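/- arXiv:1903.03917 — 3 statements merged into one kernel-verified Lean document; each statement's English description precedes it below -/
import Mathlib

section
/- Let X and Y be random variables on a probability space (Ω, 𝓕, P) with 0 < Var(X) < ∞ and 0 < Var(Y) < ∞, and suppose there exist a, b, c, d ∈ ℝ with E(Y|X) = aX + c a.s. and E(X|Y) = bY + d a.s. Then 0 ≤ ab ≤ 1 and ab = ρ_{XY}², where ρ_{XY} = Cov(X,Y)/√(Var(X)Var(Y)) is the correlation coefficient of X and Y. -/
open MeasureTheory ProbabilityTheory

/-! Conditioning on `X` does not change the covariance with the `σ(X)`-measurable `X`, so a linear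
regression `E(Y|X) = aX + c` gives `Cov(X,Y) = a Var X`, and symmetrically `Cov(X,Y) = b Var Y`.
Multiplying, `ab Var X Var Y = Cov(X,Y)²`, and Cauchy–Schwarz bounds this by `Var X Var Y`. -/

namespace ProbabilityTheory

variable {Ω : Type*} {mΩ : MeasurableSpace Ω} {μ : Measure Ω} {X Y Y' : Ω → ℝ}

lemma covariance_congr_right (h : Y =ᵐ[μ] Y') : cov[X, Y; μ] = cov[X, Y'; μ] := by
  rw [covariance, covariance, integral_congr_ae h]
  exact integral_congr_ae (by filter_upwards [h] with ω hω; rw [hω])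

lemma covariance_sq_le_variance_mul_variance [IsFiniteMeasure μ] (hX : MemLp X 2 μ)
    (hY : MemLp Y 2 μ) : cov[X, Y; μ] ^ 2 ≤ Var[X; μ] * Var[Y; μ] := by
  have hquad : ∀ t : ℝ, 0 ≤ Var[X; μ] * (t * t) + (-2 * cov[X, Y; μ]) * t + Var[Y; μ] := by
    intro t
    have hvar := variance_sub (hX.const_smul t) hY
    rw [variance_smul, covariance_smul_left] at hvar
    nlinarith [variance_nonneg (t • X - Y) μ]
  have hdisc := discrim_le_zero hquad
  rw [discrim] at hdisc
  linarith

lemma covariance_condExp_right {m : MeasurableSpace Ω} [IsProbabilityMeasure μ] (hm : m ≤ mΩ)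
    (hXm : StronglyMeasurable[m] X) (hX : MemLp X 2 μ) (hY : MemLp Y 2 μ) :
    cov[X, μ[Y | m]; μ] = cov[X, Y; μ] := by
  have hpull : μ[X * Y | m] =ᵐ[μ] X * μ[Y | m] :=
    condExp_mul_of_stronglyMeasurable_left hXm (hX.integrable_mul hY) (hY.integrable one_le_two)
  have hmul : μ[X * μ[Y | m]] = μ[X * Y] := by
    rw [← integral_congr_ae hpull, integral_condExp hm]
  rw [covariance_eq_sub hX (hY.condExp one_le_two), covariance_eq_sub hX hY, hmul,
    integral_condExp hm]

lemma covariance_eq_mul_variance_of_condExp_comap_eq [IsProbabilityMeasure μ]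
    (hXm : Measurable X) (hX : MemLp X 2 μ) (hY : MemLp Y 2 μ) {a c : ℝ}
    (h : μ[Y | MeasurableSpace.comap X inferInstance] =ᵐ[μ] fun ω => a * X ω + c) :
    cov[X, Y; μ] = a * Var[X; μ] := by
  rw [← covariance_condExp_right hXm.comap_le (comap_measurable X).stronglyMeasurable hX hY,
    covariance_congr_right h, covariance_add_const_right ((hX.integrable one_le_two).const_mul a),
    covariance_const_mul_right, covariance_self hX.aemeasurable]

end ProbabilityTheory

/-- **Lemma 2.2 (i).** If `E(Y|X) = aX + c` and `E(X|Y) = bY + d` a.s., where `X, Y` have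
finite positive variance, then `0 ≤ ab ≤ 1` and `ab = ρ_{XY}²` where `ρ_{XY}` is the
correlation coefficient of `X` and `Y`. -/
theorem linearly_compatible_ab_eq_corr_sq
    {Ω : Type*} [MeasurableSpace Ω] (P : Measure Ω) [IsProbabilityMeasure P]
    (X Y : Ω → ℝ) (hX : Measurable X) (hY : Measurable Y)
    (hX2 : MemLp X 2 P) (hY2 : MemLp Y 2 P)
    (hVarX : 0 < variance X P) (hVarY : 0 < variance Y P)
    (a b c d : ℝ)
    (hYX : P[Y | MeasurableSpace.comap X inferInstance] =ᵐ[P] fun ω => a * X ω + c)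
    (hXY : P[X | MeasurableSpace.comap Y inferInstance] =ᵐ[P] fun ω => b * Y ω + d) :
    0 ≤ a * b ∧ a * b ≤ 1 ∧
      a * b = ((∫ ω, X ω * Y ω ∂P - (∫ ω, X ω ∂P) * ∫ ω, Y ω ∂P) /
        Real.sqrt (variance X P * variance Y P)) ^ 2 := by
  have hcov : ∫ ω, X ω * Y ω ∂P - (∫ ω, X ω ∂P) * ∫ ω, Y ω ∂P = cov[X, Y; P] :=
    (covariance_eq_sub hX2 hY2).symm
  have hcovX : cov[X, Y; P] = a * Var[X; P] :=
    covariance_eq_mul_variance_of_condExp_comap_eq hX hX2 hY2 hYX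
  have hcovY : cov[X, Y; P] = b * Var[Y; P] := by
    rw [covariance_comm]
    exact covariance_eq_mul_variance_of_condExp_comap_eq hY hY2 hX2 hXY
  have hVV : 0 < Var[X; P] * Var[Y; P] := mul_pos hVarX hVarY
  have hab : a * b = cov[X, Y; P] ^ 2 / (Var[X; P] * Var[Y; P]) := by
    rw [eq_div_iff hVV.ne', sq]
    nth_rewrite 1 [hcovX]
    rw [hcovY]
    ring
  refine ⟨by rw [hab]; positivity, ?_, ?_⟩
  · rw [hab, div_le_one hVV]
    exact covariance_sq_le_variance_mul_variance hX2 hY2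
  · rw [hab, hcov, div_pow, Real.sq_sqrt hVV.le]
end

section
/- Let X and Y be random variables on a probability space (Ω, 𝓕, P) with 0 < Var(X) < ∞ and 0 < Var(Y) < ∞, and suppose there exist a, b, c, d ∈ ℝ with E(Y|X) = aX + c a.s. and E(X|Y) = bY + d a.s. If ab < 1, then E[X | σ(X)̄ ∩ σ(Y)̄] = E(X) a.s. and E[Y | σ(X)̄ ∩ σ(Y)̄] = E(Y) a.s., where σ(X)̄ (resp. σ(Y)̄) denotes the σ-field generated by σ(X) (resp. σ(Y)) together with the P-null sets of 𝓕. -/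
/-!
Adjoining null sets does not change conditional expectations, so the two linear regressions
also hold for the completed σ-fields. Let `Z = E[X | 𝒢]` with `𝒢 = σ(X)̄ ∩ σ(Y)̄`. Since `Z` is
measurable for both completed σ-fields, pulling it out of `E(X|Y)` and `E(Y|X)` gives
`E[ZX] = b E[ZY] + d E[X]` and `E[ZY] = a E[ZX] + c E[X]`; with `Z = 1` the same relations hold
for the means. Eliminating yields `(1 - ab) (E[ZX] - E[X]²) = 0`, and `E[ZX] = E[Z²]`, so
`(1 - ab) Var Z = 0`. As `ab < 1`, `Z` is a.s. the constant `E[Z] = E[X]`.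
-/

open MeasureTheory ProbabilityTheory Filter Topology

open scoped ENNReal NNReal

/-- The σ-field generated by a sub-σ-field `G` together with the `P`-null sets of the
ambient σ-field. -/
def withNullSets {Ω : Type*} {m : MeasurableSpace Ω} (P : Measure Ω)
    (G : MeasurableSpace Ω) : MeasurableSpace Ω :=
  G ⊔ MeasurableSpace.generateFrom {s : Set Ω | MeasurableSet[m] s ∧ P s = 0}

section NullSets

variable {Ω : Type*} {m₀ : MeasurableSpace Ω} {μ : Measure Ω} {m : MeasurableSpace Ω}

lemma withNullSets_le (hm : m ≤ m₀) : withNullSets μ m ≤ m₀ :=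
  sup_le hm (MeasurableSpace.generateFrom_le fun _ hs => hs.1)

lemma withNullSets_le_eventuallyMeasurableSpace :
    withNullSets μ m ≤ eventuallyMeasurableSpace m (ae μ) :=
  sup_le (fun s hs => ⟨s, hs, EventuallyEq.rfl⟩) <| MeasurableSpace.generateFrom_le
    fun _ hs => ⟨∅, MeasurableSet.empty, ae_eq_empty.mpr hs.2⟩

lemma condExp_withNullSets_ae_eq [IsFiniteMeasure μ] (hm : m ≤ m₀) {f : Ω → ℝ}
    (hf : Integrable f μ) : μ[f | withNullSets μ m] =ᵐ[μ] μ[f | m] := by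
  refine (ae_eq_condExp_of_forall_setIntegral_eq (withNullSets_le hm) hf
    (fun _ _ _ => integrable_condExp.integrableOn) (fun s hs _ => ?_)
    (stronglyMeasurable_condExp.aestronglyMeasurable.mono le_sup_left)).symm
  obtain ⟨t, ht, hst⟩ := withNullSets_le_eventuallyMeasurableSpace s hs
  rw [setIntegral_congr_set hst, setIntegral_congr_set hst, setIntegral_condExp hm hf ht]

end NullSets

section AffineRegression

variable {Ω : Type*} {m₀ : MeasurableSpace Ω} {μ : Measure Ω} [IsFiniteMeasure μ]
  {m : MeasurableSpace Ω} {Z f g : Ω → ℝ}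

lemma integral_mul_condExp (hm : m ≤ m₀) (hZ : StronglyMeasurable[m] Z)
    (hZf : Integrable (Z * f) μ) (hf : Integrable f μ) :
    ∫ ω, Z ω * μ[f | m] ω ∂μ = ∫ ω, Z ω * f ω ∂μ := by
  calc ∫ ω, Z ω * μ[f | m] ω ∂μ = ∫ ω, μ[Z * f | m] ω ∂μ :=
        integral_congr_ae (condExp_mul_of_stronglyMeasurable_left hZ hZf hf).symm
    _ = ∫ ω, Z ω * f ω ∂μ := integral_condExp hm

lemma integral_mul_eq_of_condExp_ae_eq_affine (hm : m ≤ m₀) (hZ : StronglyMeasurable[m] Z)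
    (hZ2 : MemLp Z 2 μ) (hf : MemLp f 2 μ) (hg : MemLp g 2 μ) {β δ : ℝ}
    (hfg : μ[f | m] =ᵐ[μ] fun ω => β * g ω + δ) :
    ∫ ω, Z ω * f ω ∂μ = β * ∫ ω, Z ω * g ω ∂μ + δ * ∫ ω, Z ω ∂μ := by
  have hZg : Integrable (fun ω => Z ω * g ω) μ := hZ2.integrable_mul hg
  calc ∫ ω, Z ω * f ω ∂μ = ∫ ω, Z ω * μ[f | m] ω ∂μ :=
        (integral_mul_condExp hm hZ (hZ2.integrable_mul hf) (hf.integrable one_le_two)).symm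
    _ = ∫ ω, β * (Z ω * g ω) + δ * Z ω ∂μ := by
        refine integral_congr_ae ?_
        filter_upwards [hfg] with ω hω
        rw [hω]
        ring
    _ = β * ∫ ω, Z ω * g ω ∂μ + δ * ∫ ω, Z ω ∂μ := by
        rw [integral_add (hZg.const_mul β) ((hZ2.integrable one_le_two).const_mul δ),
          integral_const_mul, integral_const_mul]

end AffineRegression

lemma condExp_inf_ae_eq_integral_of_affine_condExp {Ω : Type*} {m₀ : MeasurableSpace Ω}
    {μ : Measure Ω} [IsProbabilityMeasure μ] {m₁ m₂ : MeasurableSpace Ω}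
    (h₁ : m₁ ≤ m₀) (h₂ : m₂ ≤ m₀) {f g : Ω → ℝ} (hf : MemLp f 2 μ) (hg : MemLp g 2 μ)
    {a b c d : ℝ} (hgf : μ[g | m₁] =ᵐ[μ] fun ω => a * f ω + c)
    (hfg : μ[f | m₂] =ᵐ[μ] fun ω => b * g ω + d) (hab : a * b < 1) :
    μ[f | m₁ ⊓ m₂] =ᵐ[μ] fun _ => ∫ ω, f ω ∂μ := by
  set Z := μ[f | m₁ ⊓ m₂]
  have hZm : StronglyMeasurable[m₁ ⊓ m₂] Z := stronglyMeasurable_condExp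
  have hZ2 : MemLp Z 2 μ := hf.condExp one_le_two
  have hZ_mean : ∫ ω, Z ω ∂μ = ∫ ω, f ω ∂μ := integral_condExp (inf_le_left.trans h₁)
  have hf_mean : ∫ ω, f ω ∂μ = b * ∫ ω, g ω ∂μ + d := by
    simpa using integral_mul_eq_of_condExp_ae_eq_affine h₂ stronglyMeasurable_const
      (memLp_const 1) hf hg hfg
  have hg_mean : ∫ ω, g ω ∂μ = a * ∫ ω, f ω ∂μ + c := by
    simpa using integral_mul_eq_of_condExp_ae_eq_affine h₁ stronglyMeasurable_const
      (memLp_const 1) hg hf hgf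
  have hZf : ∫ ω, Z ω * f ω ∂μ = b * ∫ ω, Z ω * g ω ∂μ + d * ∫ ω, Z ω ∂μ :=
    integral_mul_eq_of_condExp_ae_eq_affine h₂ (hZm.mono inf_le_right) hZ2 hf hg hfg
  have hZg : ∫ ω, Z ω * g ω ∂μ = a * ∫ ω, Z ω * f ω ∂μ + c * ∫ ω, Z ω ∂μ :=
    integral_mul_eq_of_condExp_ae_eq_affine h₁ (hZm.mono inf_le_left) hZ2 hg hf hgf
  have hZZ : ∫ ω, Z ω * Z ω ∂μ = ∫ ω, Z ω * f ω ∂μ :=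
    integral_mul_condExp (inf_le_left.trans h₁) hZm (hZ2.integrable_mul hf)
      (hf.integrable one_le_two)
  have hvar : Var[Z; μ] = 0 := by
    have h : (1 - a * b) * Var[Z; μ] = 0 := by
      simp only [variance_eq_sub hZ2, Pi.pow_apply, sq]
      rw [hZZ, hZ_mean]
      linear_combination hZf + b * hZg - (∫ ω, f ω ∂μ) * (hf_mean + b * hg_mean)
        + (b * c + d) * hZ_mean
    exact (mul_eq_zero.mp h).resolve_left (by linarith)
  filter_upwards [ae_eq_integral_of_variance_eq_zero hZ2 hvar] with ω hω
  rw [hω, hZ_mean]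

theorem linearly_compatible_ab_lt_one_general
    {Ω : Type*} [MeasurableSpace Ω] (P : Measure Ω) [IsProbabilityMeasure P]
    (X Y : Ω → ℝ) (hX : Measurable X) (hY : Measurable Y)
    (hX2 : MemLp X 2 P) (hY2 : MemLp Y 2 P)
    (a b c d : ℝ)
    (hYX : P[Y | MeasurableSpace.comap X inferInstance] =ᵐ[P] fun ω => a * X ω + c)
    (hXY : P[X | MeasurableSpace.comap Y inferInstance] =ᵐ[P] fun ω => b * Y ω + d)
    (hab : a * b < 1) :
    (P[X | withNullSets P (MeasurableSpace.comap X inferInstance) ⊓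
        withNullSets P (MeasurableSpace.comap Y inferInstance)] =ᵐ[P]
      fun _ => ∫ ω, X ω ∂P) ∧
    (P[Y | withNullSets P (MeasurableSpace.comap X inferInstance) ⊓
        withNullSets P (MeasurableSpace.comap Y inferInstance)] =ᵐ[P]
      fun _ => ∫ ω, Y ω ∂P) := by
  have hYX' := (condExp_withNullSets_ae_eq hX.comap_le (hY2.integrable one_le_two)).trans hYX
  have hXY' := (condExp_withNullSets_ae_eq hY.comap_le (hX2.integrable one_le_two)).trans hXY
  have hσX := withNullSets_le (μ := P) hX.comap_le
  have hσY := withNullSets_le (μ := P) hY.comap_le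
  refine ⟨condExp_inf_ae_eq_integral_of_affine_condExp hσX hσY hX2 hY2 hYX' hXY' hab, ?_⟩
  rw [inf_comm]
  exact condExp_inf_ae_eq_integral_of_affine_condExp hσY hσX hY2 hX2 hXY' hYX'
    (by rwa [mul_comm])

/-- **Lemma 2.2 (iii).** If `E(Y|X) = aX + c` and `E(X|Y) = bY + d` a.s., where `X, Y`
have finite positive variance, and `ab < 1`, then
`E[X | σ(X)̄ ∩ σ(Y)̄] = E(X)` and `E[Y | σ(X)̄ ∩ σ(Y)̄] = E(Y)` a.s. -/
theorem linearly_compatible_ab_lt_one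
    {Ω : Type*} [MeasurableSpace Ω] (P : Measure Ω) [IsProbabilityMeasure P]
    (X Y : Ω → ℝ) (hX : Measurable X) (hY : Measurable Y)
    (hX2 : MemLp X 2 P) (hY2 : MemLp Y 2 P)
    (hVarX : 0 < variance X P) (hVarY : 0 < variance Y P)
    (a b c d : ℝ)
    (hYX : P[Y | MeasurableSpace.comap X inferInstance] =ᵐ[P] fun ω => a * X ω + c)
    (hXY : P[X | MeasurableSpace.comap Y inferInstance] =ᵐ[P] fun ω => b * Y ω + d)
    (hab : a * b < 1) :
    (P[X | withNullSets P (MeasurableSpace.comap X inferInstance) ⊓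
        withNullSets P (MeasurableSpace.comap Y inferInstance)] =ᵐ[P]
      fun _ => ∫ ω, X ω ∂P) ∧
    (P[Y | withNullSets P (MeasurableSpace.comap X inferInstance) ⊓
        withNullSets P (MeasurableSpace.comap Y inferInstance)] =ᵐ[P]
      fun _ => ∫ ω, Y ω ∂P) :=
  linearly_compatible_ab_lt_one_general P X Y hX hY hX2 hY2 a b c d hYX hXY hab
end

section
/- Let (Ω, 𝓕, P) be a probability space and let H be a closed linear subspace of L²(Ω, 𝓕, P) such that E(h) = 0 for every h ∈ H and H is a linearly compatible family. Then for every closed linear subspace G ⊆ H that admits a countable orthonormal basis, there exists a sub-σ-field 𝓖 of 𝓕 such that E(h | 𝓖) = P_G h for all h ∈ H, where P_G denotes the orthogonal projection of L²(Ω, 𝓕, P) onto G. -/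
open MeasureTheory ProbabilityTheory Filter Topology

open scoped ENNReal NNReal

/-! With `𝓖ₙ = σ(g₀, …, gₙ)`, linear compatibility makes `E(h | 𝓖ₙ)` an affine combination of
`g₀, …, gₙ`; centring kills the constant and orthonormality identifies the coefficients as
`⟪gᵢ, h⟫`, so `E(h | 𝓖ₙ)` is the `n`-th partial sum of the Fourier series of `h` along `(gᵢ)`.
These partial sums converge in `L²` to `P_G h`, and by Lévy's upward theorem they converge a.e.
to `E(h | ⨆ₙ 𝓖ₙ)`, so `𝓖 = σ(gᵢ : i ∈ ℕ)` works. -/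

theorem Orthonormal.hasSum_inner_smul_starProjection {ι 𝕜 E : Type*} [RCLike 𝕜]
    [NormedAddCommGroup E] [InnerProductSpace 𝕜 E] {g : ι → E} (hg : Orthonormal 𝕜 g)
    {K : Submodule 𝕜 E} [CompleteSpace K]
    (hK : K = (Submodule.span 𝕜 (Set.range g)).topologicalClosure) (x : E) :
    HasSum (fun i => inner 𝕜 (g i) x • g i) (K.starProjection x) := by
  have hgK : ∀ i, g i ∈ K := fun i =>
    hK ▸ Submodule.le_topologicalClosure _ (Submodule.subset_span ⟨i, rfl⟩)
  set v : ι → K := fun i => ⟨g i, hgK i⟩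
  have hv : Orthonormal 𝕜 v := K.subtypeₗᵢ.orthonormal_comp_iff.mp hg
  have hdense : ⊤ ≤ (Submodule.span 𝕜 (Set.range v)).topologicalClosure := by
    rw [top_le_iff, ← Submodule.dense_iff_topologicalClosure_eq_top, Subtype.dense_iff]
    have hspan := congrArg SetLike.coe (Submodule.map_span K.subtype (Set.range v))
    rw [Submodule.map_coe, ← Set.range_comp] at hspan
    rw [← Submodule.coe_subtype, hspan]
    exact hK.le
  simpa [v] using K.subtypeL.hasSum ((HilbertBasis.mk hv hdense).hasSum_orthogonalProjectionOnto x)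

namespace MeasureTheory

theorem Filtration.natural_eq_iSup_fin {Ω β : Type*} {mΩ : MeasurableSpace Ω}
    [TopologicalSpace β] [TopologicalSpace.MetrizableSpace β] [mβ : MeasurableSpace β]
    [BorelSpace β] (u : ℕ → Ω → β) (hu : ∀ i, StronglyMeasurable (u i)) (n : ℕ) :
    Filtration.natural u hu n = ⨆ i : Fin (n + 1), MeasurableSpace.comap (u i) mβ :=
  le_antisymm (iSup₂_le fun j hj => le_iSup_of_le ⟨j, Nat.lt_succ_of_le hj⟩ le_rfl)
    (iSup_le fun i => le_iSup₂_of_le (i : ℕ) (Nat.le_of_lt_succ i.isLt) le_rfl)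

variable {Ω : Type*} {m mΩ : MeasurableSpace Ω} {P : Measure Ω}

theorem L2.real_inner_eq_integral_mul (u f : Lp ℝ 2 P) :
    inner ℝ u f = ∫ ω, u ω * f ω ∂P := by
  simp only [L2.inner_def, RCLike.inner_apply, conj_trivial, mul_comm]

theorem L2.integrable_mul (u f : Lp ℝ 2 P) : Integrable (fun ω => u ω * f ω) P :=
  (Lp.memLp u).integrable_mul (Lp.memLp f)

theorem L2.real_inner_eq_integral_mul_condExp [IsFiniteMeasure P] (hm : m ≤ mΩ) {u : Lp ℝ 2 P}
    (hu : StronglyMeasurable[m] u) (f : Lp ℝ 2 P) :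
    inner ℝ u f = ∫ ω, u ω * (P[f | m]) ω ∂P := by
  rw [L2.real_inner_eq_integral_mul, ← integral_condExp hm]
  exact integral_congr_ae (condExp_mul_of_stronglyMeasurable_left hu
    (L2.integrable_mul u f) ((Lp.memLp f).integrable one_le_two))

variable {ι : Type*} [Fintype ι] {v : ι → Lp ℝ 2 P}

theorem L2.integral_mul_const_add_sum_mul [IsFiniteMeasure P] (hv : Orthonormal ℝ v)
    (hv₀ : ∀ i, ∫ ω, v i ω ∂P = 0) (c : ℝ) (a : ι → ℝ) (j : ι) :
    ∫ ω, v j ω * (c + ∑ i, a i * v i ω) ∂P = a j := by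
  have hint : ∀ i, Integrable (fun ω => a i * (v j ω * v i ω)) P := fun i =>
    (L2.integrable_mul (v j) (v i)).const_mul (a i)
  calc ∫ ω, v j ω * (c + ∑ i, a i * v i ω) ∂P
      = ∫ ω, c * v j ω + ∑ i, a i * (v j ω * v i ω) ∂P := by
        congr 1; ext ω; rw [mul_add, Finset.mul_sum]; congr 1 <;> ring_nf
    _ = ∑ i, a i * inner ℝ (v j) (v i) := by
        rw [integral_add ((Lp.memLp (v j)).integrable one_le_two |>.const_mul c)
          (integrable_finsetSum _ fun i _ => hint i), integral_const_mul, hv₀,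
          integral_finsetSum _ fun i _ => hint i]
        simp [integral_const_mul, L2.real_inner_eq_integral_mul]
    _ = a j := by classical simp [orthonormal_iff_ite.mp hv]

theorem L2.integral_const_add_sum_mul [IsProbabilityMeasure P] (hv₀ : ∀ i, ∫ ω, v i ω ∂P = 0)
    (c : ℝ) (a : ι → ℝ) :
    ∫ ω, c + ∑ i, a i * v i ω ∂P = c := by
  have hint : ∀ i, Integrable (fun ω => a i * v i ω) P := fun i =>
    ((Lp.memLp (v i)).integrable one_le_two).const_mul (a i)
  rw [integral_add (integrable_const c) (integrable_finsetSum _ fun i _ => hint i),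
    integral_finsetSum _ fun i _ => hint i]
  simp [integral_const_mul, hv₀]

theorem condExp_ae_eq_sum_inner_smul_of_ae_eq_affine [IsProbabilityMeasure P] (hm : m ≤ mΩ)
    (hv : Orthonormal ℝ v) (hvm : ∀ i, StronglyMeasurable[m] (v i))
    (hv₀ : ∀ i, ∫ ω, v i ω ∂P = 0) {f : Lp ℝ 2 P} (hf₀ : ∫ ω, f ω ∂P = 0) {c : ℝ} {a : ι → ℝ}
    (hf : P[f | m] =ᵐ[P] fun ω => c + ∑ i, a i * v i ω) :
    P[f | m] =ᵐ[P] ⇑(∑ i, inner ℝ (v i) f • v i) := by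
  have hc : c = 0 := by
    rw [← L2.integral_const_add_sum_mul hv₀ c a, ← integral_congr_ae hf, integral_condExp hm, hf₀]
  have ha : ∀ j, a j = inner ℝ (v j) f := fun j => by
    rw [L2.real_inner_eq_integral_mul_condExp hm (hvm j),
      integral_congr_ae (hf.mono fun ω hω => by rw [hω]), L2.integral_mul_const_add_sum_mul hv hv₀]
  refine hf.trans ?_
  filter_upwards [Lp.coeFn_fun_finsetSum Finset.univ fun i => inner ℝ (v i) f • v i,
    ae_all_iff.2 fun i => Lp.coeFn_smul (inner ℝ (v i) f) (v i)] with ω hsum hsmul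
  rw [hsum, hc, zero_add]
  simp only [hsmul, ha, Pi.smul_apply, smul_eq_mul]

theorem condExp_iSup_ae_eq_of_tendsto [IsFiniteMeasure P] {p : ℝ≥0∞} [Fact (1 ≤ p)]
    (ℱ : Filtration ℕ mΩ) (f : Ω → ℝ) {S : ℕ → Lp ℝ p P} {q : Lp ℝ p P}
    (hS : ∀ n, P[f | ℱ n] =ᵐ[P] S n) (hq : Tendsto S atTop (𝓝 q)) :
    P[f | ⨆ n, ℱ n] =ᵐ[P] q :=
  tendstoInMeasure_ae_unique
    (tendstoInMeasure_of_tendsto_ae (fun _ => integrable_condExp.aestronglyMeasurable)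
      (tendsto_ae_condExp f))
    ((tendstoInMeasure_of_tendsto_Lp hq).congr_left fun n => (hS n).symm)

end MeasureTheory

theorem condexp_eq_orthogonal_projection_of_linearly_compatible_general
    {Ω : Type*} [m : MeasurableSpace Ω] (P : Measure Ω) [IsProbabilityMeasure P]
    (H : Submodule ℝ (Lp ℝ 2 P))
    (hmean : ∀ h ∈ H, ∫ ω, (h : Lp ℝ 2 P) ω ∂P = 0)
    (hcompat : ∀ h₀ ∈ H, ∀ (n : ℕ) (v : Fin n → Lp ℝ 2 P), (∀ i, v i ∈ H) →
      ∃ (a₀ : ℝ) (a : Fin n → ℝ),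
        P[(h₀ : Ω → ℝ) | ⨆ i, MeasurableSpace.comap (v i) inferInstance] =ᵐ[P]
          fun ω => a₀ + ∑ i, a i * v i ω)
    (G : Submodule ℝ (Lp ℝ 2 P)) (hGH : G ≤ H)
    (g : ℕ → Lp ℝ 2 P) (hg : Orthonormal ℝ g)
    (hspan : G = (Submodule.span ℝ (Set.range g)).topologicalClosure) :
    ∃ 𝓖 : MeasurableSpace Ω, 𝓖 ≤ m ∧
      ∀ h ∈ H, ∃ q ∈ G, (∀ g' ∈ G, inner (𝕜 := ℝ) (h - q) g' = (0 : ℝ)) ∧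
        P[(h : Ω → ℝ) | 𝓖] =ᵐ[P] (q : Ω → ℝ) := by
  have hgH : ∀ i, g i ∈ H := fun i =>
    hGH (hspan ▸ Submodule.le_topologicalClosure _ (Submodule.subset_span ⟨i, rfl⟩))
  have hGclosed : IsClosed (G : Set (Lp ℝ 2 P)) := hspan ▸ Submodule.isClosed_topologicalClosure _
  have : CompleteSpace G := hGclosed.completeSpace_coe
  have hgm : ∀ i, StronglyMeasurable (g i) := fun i => Lp.stronglyMeasurable (g i)
  set ℱ := Filtration.natural (fun i => ⇑(g i)) hgm
  refine ⟨⨆ n, ℱ n, iSup_le ℱ.le, fun h hH => ⟨G.starProjection h, G.starProjection_apply_mem h,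
    fun g' hg' => G.inner_left_of_mem_orthogonal hg' (G.sub_starProjection_mem_orthogonal h), ?_⟩⟩
  refine condExp_iSup_ae_eq_of_tendsto ℱ h
    (S := fun n => ∑ i : Fin (n + 1), inner ℝ (g i) h • g i) (fun n => ?_) ?_
  · obtain ⟨c, a, hca⟩ := hcompat h hH (n + 1) (fun i => g i) fun i => hgH i
    rw [← Filtration.natural_eq_iSup_fin _ hgm] at hca
    exact condExp_ae_eq_sum_inner_smul_of_ae_eq_affine (ℱ.le n) (hg.comp _ Fin.val_injective)
      (fun i => (Filtration.stronglyAdapted_natural hgm i).mono (ℱ.mono (Nat.le_of_lt_succ i.isLt)))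
      (fun i => hmean _ (hgH i)) (hmean h hH) hca
  · simpa only [Fin.sum_univ_eq_sum_range (fun i => inner ℝ (g i) h • g i), Function.comp_def] using
      (hg.hasSum_inner_smul_starProjection hspan h).tendsto_sum_nat.comp (tendsto_add_atTop_nat 1)

/-- **Lemma 2.7.** Let `H` be a closed linear subspace of `L²(Ω, 𝓕, P)` consisting of
centered random variables which is a linearly compatible family. Then for every closed
linear subspace `G ⊆ H` with a countable orthonormal basis there is a sub-σ-field `𝓖`
of `𝓕` such that `E(h | 𝓖) = P_G h` for all `h ∈ H` (where `P_G h` is characterized as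
the element `q ∈ G` with `h - q ⊥ G`). -/
theorem condexp_eq_orthogonal_projection_of_linearly_compatible
    {Ω : Type*} [m : MeasurableSpace Ω] (P : Measure Ω) [IsProbabilityMeasure P]
    (H : Submodule ℝ (Lp ℝ 2 P)) (hHclosed : IsClosed (H : Set (Lp ℝ 2 P)))
    (hmean : ∀ h ∈ H, ∫ ω, (h : Lp ℝ 2 P) ω ∂P = 0)
    (hcompat : ∀ h₀ ∈ H, ∀ (n : ℕ) (v : Fin n → Lp ℝ 2 P), (∀ i, v i ∈ H) →
      ∃ (a₀ : ℝ) (a : Fin n → ℝ),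
        P[(h₀ : Ω → ℝ) | ⨆ i, MeasurableSpace.comap (v i) inferInstance] =ᵐ[P]
          fun ω => a₀ + ∑ i, a i * v i ω)
    (G : Submodule ℝ (Lp ℝ 2 P)) (hGH : G ≤ H)
    (g : ℕ → Lp ℝ 2 P) (hg : Orthonormal ℝ g)
    (hspan : G = (Submodule.span ℝ (Set.range g)).topologicalClosure) :
    ∃ 𝓖 : MeasurableSpace Ω, 𝓖 ≤ m ∧
      ∀ h ∈ H, ∃ q ∈ G, (∀ g' ∈ G, inner (𝕜 := ℝ) (h - q) g' = (0 : ℝ)) ∧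
        P[(h : Ω → ℝ) | 𝓖] =ᵐ[P] (q : Ω → ℝ) :=
  condexp_eq_orthogonal_projection_of_linearly_compatible_general (m := m) P H hmean hcompat G hGH g
    hg hspan
end
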